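/- arXiv:1909.05582 — 5 statements merged into one kernel-verified Lean document; each statement's English description precedes it below -/
import Mathlib

section
/- Let (θ, x) be a discrete Bayesian large-sample estimation problem with a consistent posterior, and let (L_n) be a discerning loss function sequence. Then every Bayes estimator associated with (L_n) — i.e., every estimator satisfying θ̂_n(x_{1:n}) ∈ argmin_{θ'} E[L_n(θ, θ') | x_{1:n}] — is strongly consistent (converges almost surely to θ under P_θ for every θ). -/
open MeasureTheory ProbabilityTheory Filter Set Topology
open scoped ENNReal

/-- The cylinder event determined by the first `n` observations of `ω`. -/
def cylinder {Θ : Type*} {X : ℕ → Type*} (n : ℕ) (ω : Θ × (∀ i, X i)) :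
    Set (Θ × (∀ i, X i)) :=
  {ω' | ∀ i < n, ω'.2 i = ω.2 i}

/-!
Fix `θ` and a sample path along which the posterior weight `p n` of `θ` tends to `1`, and let
`Kₙ = ⨆ θ'', L n θ'' θ`. A Bayes action `a` has posterior risk at most that of `θ`, which is at
most `(1 - p n) * Kₙ` because `L n θ θ = 0`; it is at least `p n * L n θ a`. If `a` lies outside
a neighbourhood `U` of `θ`, discernment gives `L n θ a > c * Kₙ` for a fixed `c > 0` and all
large `n`, so `p n * c < 1 - p n`, which fails once `p n` is close to `1`.
-/

lemma tsum_measure_fst_preimage_singleton_le {Θ Ω : Type*} [MeasurableSpace Θ]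
    [MeasurableSingletonClass Θ] [MeasurableSpace Ω] (ν : Measure (Θ × Ω)) :
    ∑' θ, ν (Prod.fst ⁻¹' {θ}) ≤ ν univ :=
  (tsum_meas_le_meas_iUnion_of_disjoint ν (fun θ ↦ measurable_fst (measurableSet_singleton θ))
    (pairwise_disjoint_fiber Prod.fst)).trans_eq <| by
      rw [← preimage_iUnion, iUnion_of_singleton, preimage_univ]

open scoped Classical in
lemma tsum_ite_eq_zero_le_one_sub {Θ : Type*} {p : Θ → ℝ≥0∞} (hp : ∑' θ, p θ ≤ 1) (θ : Θ) :
    ∑' θ', (if θ' = θ then 0 else p θ') ≤ 1 - p θ :=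
  ENNReal.le_sub_of_add_le_left
    (ENNReal.ne_top_of_tsum_ne_top (ne_top_of_le_ne_top ENNReal.one_ne_top hp) θ)
    (ENNReal.tsum_eq_add_tsum_ite θ ▸ hp)

open scoped Classical in
lemma mul_loss_le_one_sub_mul_iSup_of_risk_le {Θ : Type*} {p : Θ → ℝ≥0∞}
    (hp : ∑' θ, p θ ≤ 1) {ℓ : Θ → Θ → ℝ≥0∞} (hℓ : ∀ θ, ℓ θ θ = 0) {a θ : Θ}
    (ha : ∑' θ', p θ' * ℓ θ' a ≤ ∑' θ', p θ' * ℓ θ' θ) :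
    p θ * ℓ θ a ≤ (1 - p θ) * ⨆ θ'', ℓ θ'' θ :=
  calc p θ * ℓ θ a
      ≤ ∑' θ', p θ' * ℓ θ' a := ENNReal.le_tsum θ
    _ ≤ ∑' θ', p θ' * ℓ θ' θ := ha
    _ = ∑' θ', if θ' = θ then 0 else p θ' * ℓ θ' θ := by
      rw [ENNReal.tsum_eq_add_tsum_ite θ, hℓ, mul_zero, zero_add]
    _ ≤ ∑' θ', (if θ' = θ then 0 else p θ') * ⨆ θ'', ℓ θ'' θ := by
      refine ENNReal.tsum_le_tsum fun θ' ↦ ?_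
      split_ifs
      · exact zero_le
      · gcongr
        exact le_iSup (ℓ · θ) θ'
    _ = (∑' θ', if θ' = θ then 0 else p θ') * ⨆ θ'', ℓ θ'' θ := ENNReal.tsum_mul_right
    _ ≤ (1 - p θ) * ⨆ θ'', ℓ θ'' θ := by gcongr; exact tsum_ite_eq_zero_le_one_sub hp θ

lemma mul_lt_one_sub_of_risk_le {Θ : Type*} {p : Θ → ℝ≥0∞} (hp : ∑' θ, p θ ≤ 1)
    {ℓ : Θ → Θ → ℝ≥0∞} (hℓ : ∀ θ, ℓ θ θ = 0) {a θ : Θ} {c : ℝ≥0∞}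
    (ha : ∑' θ', p θ' * ℓ θ' a ≤ ∑' θ', p θ' * ℓ θ' θ) (hc : c < ℓ θ a / ⨆ θ'', ℓ θ'' θ) :
    p θ * c < 1 - p θ := by
  rcases eq_or_ne (p θ) 0 with hpθ | hpθ
  · simp [hpθ]
  have hpθ_top : p θ ≠ ⊤ :=
    ENNReal.ne_top_of_tsum_ne_top (ne_top_of_le_ne_top ENNReal.one_ne_top hp) θ
  refine lt_of_mul_lt_mul_right' (a := ⨆ θ'', ℓ θ'' θ) ?_
  calc p θ * c * ⨆ θ'', ℓ θ'' θ
      = p θ * (c * ⨆ θ'', ℓ θ'' θ) := mul_assoc _ _ _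
    _ < p θ * ℓ θ a := (ENNReal.mul_lt_mul_iff_right hpθ hpθ_top).mpr (ENNReal.mul_lt_of_lt_div hc)
    _ ≤ (1 - p θ) * ⨆ θ'', ℓ θ'' θ := mul_loss_le_one_sub_mul_iSup_of_risk_le hp hℓ ha

lemma eventually_one_sub_lt_mul_of_tendsto_one {ι : Type*} {l : Filter ι} {p : ι → ℝ≥0∞}
    (hp : Tendsto p l (𝓝 1)) {c : ℝ≥0∞} (hc : 0 < c) :
    ∀ᶠ i in l, 1 - p i < p i * c := by
  have hsub : Tendsto (fun i ↦ 1 - p i) l (𝓝 0) := by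
    simpa using ENNReal.Tendsto.sub tendsto_const_nhds hp (.inl ENNReal.one_ne_top)
  have hmul : Tendsto (fun i ↦ p i * c) l (𝓝 c) := by
    simpa using ENNReal.Tendsto.mul_const hp (.inl one_ne_zero)
  exact hsub.eventually_lt hmul hc

theorem bayes_estimator_strongly_consistent_of_discerning_general
    {Θ : Type*} [MeasurableSpace Θ] [DiscreteMeasurableSpace Θ]
    [TopologicalSpace Θ]
    {X : ℕ → Type*} [∀ n, MeasurableSpace (X n)]
    (μ : Measure (Θ × (∀ i, X i)))
    -- consistent posterior
    (hpost : ∀ θ : Θ,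
        ∀ᵐ ω ∂(μ[|Prod.fst ⁻¹' {θ}]),
          Tendsto (fun n : ℕ => (μ[|cylinder n ω]) (Prod.fst ⁻¹' {θ})) atTop (𝓝 1))
    -- the loss function sequence
    (L : ℕ → Θ → Θ → ℝ≥0∞)
    (hL0 : ∀ n θ, L n θ θ = 0)
    -- discerning
    (hdisc : ∀ θ : Θ, ∀ U ∈ 𝓝 θ,
        0 < liminf (fun n : ℕ => ⨅ θ' ∈ Uᶜ, L n θ θ' / ⨆ θ'', L n θ'' θ) atTop)
    -- a Bayes estimator associated with `L`
    (est : (n : ℕ) → (∀ i, X i) → Θ)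
    (hbayes : ∀ (n : ℕ) (ω : Θ × (∀ i, X i)) (θ₀ : Θ),
        (∑' θ' : Θ, (μ[|cylinder n ω]) (Prod.fst ⁻¹' {θ'}) * L n θ' (est n ω.2)) ≤
          ∑' θ' : Θ, (μ[|cylinder n ω]) (Prod.fst ⁻¹' {θ'}) * L n θ' θ₀) :
    ∀ θ : Θ, ∀ᵐ ω ∂(μ[|Prod.fst ⁻¹' {θ}]),
        Tendsto (fun n : ℕ => est n ω.2) atTop (𝓝 θ) := by
  intro θ
  filter_upwards [hpost θ] with ω hω
  rw [tendsto_def]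
  intro U hU
  obtain ⟨c, hc0, hc⟩ := exists_between (hdisc θ U hU)
  filter_upwards [eventually_lt_of_lt_liminf hc, eventually_one_sub_lt_mul_of_tendsto_one hω hc0]
    with n hdiscn hpn
  by_contra hestU
  have hmass := (tsum_measure_fst_preimage_singleton_le (μ[|cylinder n ω])).trans prob_le_one
  exact (hpn.trans (mul_lt_one_sub_of_risk_le hmass (hL0 n) (hbayes n ω θ)
    (hdiscn.trans_le (iInf₂_le (est n ω.2) hestU)))).false

/-- On a discrete Bayesian large-sample estimation problem with a consistent posterior,
every Bayes estimator associated with a discerning loss function sequence is strongly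
consistent. -/
theorem bayes_estimator_strongly_consistent_of_discerning
    {Θ : Type*} [Countable Θ] [MeasurableSpace Θ] [DiscreteMeasurableSpace Θ]
    [TopologicalSpace Θ] [T1Space Θ] [FirstCountableTopology Θ]
    {X : ℕ → Type*} [∀ n, Countable (X n)] [∀ n, MeasurableSpace (X n)]
    [∀ n, DiscreteMeasurableSpace (X n)]
    (μ : Measure (Θ × (∀ i, X i))) [IsProbabilityMeasure μ]
    (hprior : ∀ θ : Θ, 0 < μ (Prod.fst ⁻¹' {θ}))
    -- consistent posterior
    (hpost : ∀ θ : Θ,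
        ∀ᵐ ω ∂(μ[|Prod.fst ⁻¹' {θ}]),
          Tendsto (fun n : ℕ => (μ[|cylinder n ω]) (Prod.fst ⁻¹' {θ})) atTop (𝓝 1))
    -- the loss function sequence
    (L : ℕ → Θ → Θ → ℝ≥0∞)
    (hLfin : ∀ n θ θ', L n θ θ' ≠ ⊤)
    (hL0 : ∀ n θ, L n θ θ = 0)
    -- discerning
    (hdisc : ∀ θ : Θ, ∀ U ∈ 𝓝 θ,
        0 < liminf (fun n : ℕ => ⨅ θ' ∈ Uᶜ, L n θ θ' / ⨆ θ'', L n θ'' θ) atTop)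
    -- a Bayes estimator associated with `L`
    (est : (n : ℕ) → (∀ i, X i) → Θ)
    (hdep : ∀ n (x y : ∀ i, X i), (∀ i < n, x i = y i) → est n x = est n y)
    (hbayes : ∀ (n : ℕ) (ω : Θ × (∀ i, X i)) (θ₀ : Θ),
        (∑' θ' : Θ, (μ[|cylinder n ω]) (Prod.fst ⁻¹' {θ'}) * L n θ' (est n ω.2)) ≤
          ∑' θ' : Θ, (μ[|cylinder n ω]) (Prod.fst ⁻¹' {θ'}) * L n θ' θ₀) :
    ∀ θ : Θ, ∀ᵐ ω ∂(μ[|Prod.fst ⁻¹' {θ}]),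
        Tendsto (fun n : ℕ => est n ω.2) atTop (𝓝 θ) :=
  bayes_estimator_strongly_consistent_of_discerning_general μ hpost L hL0 hdisc est hbayes
end

section
/- A discrete Bayesian large-sample estimation problem has a consistent posterior if and only if it has convergent likelihood ratios, i.e., for all distinct θ, θ' ∈ Θ, the ratio P_{θ'}^{(1:n)}(x_{1:n}) / P_θ^{(1:n)}(x_{1:n}) converges almost surely to 0 when x is distributed according to P_θ. -/
open MeasureTheory ProbabilityTheory Filter Set Topology
open scoped ENNReal

/-!
By Bayes' theorem, the likelihood ratio of `θ'` against `θ` on the first `n` observations is the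
prior odds `μ{θ} / μ{θ'}` times the posterior odds of `θ'` against `θ`. So a posterior
concentrating on `θ` drives the ratio to `0`. Conversely, if all these ratios vanish, the posterior
of `θ` tends to `0` almost surely off `{θ}` (a countable union of the events `{θ'}`). By Lévy's
upward theorem it converges almost surely to `Z = 𝔼[1_{θ} | ℱ_∞]`; since `Z ≤ 1`, `Z = 0` off `{θ}`
and `∫ Z = μ{θ}`, we get `Z = 1` almost surely on `{θ}`.
-/

section ConditionalProbability

variable {Ω : Type*} [MeasurableSpace Ω] {μ : Measure Ω} {s s' c : Set Ω}

lemma ae_cond_iff_ae_restrict [IsFiniteMeasure μ] {p : Ω → Prop} :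
    (∀ᵐ ω ∂μ[|s], p ω) ↔ ∀ᵐ ω ∂μ.restrict s, p ω :=
  Measure.ae_ennreal_smul_measure_iff (ENNReal.inv_ne_zero.2 (measure_ne_top μ s))

lemma cond_le_one_sub_cond_of_disjoint (hs : MeasurableSet s) (hss' : Disjoint s s') :
    μ[s' | c] ≤ 1 - μ[s | c] :=
  calc μ[s' | c] ≤ μ[|c] sᶜ := measure_mono hss'.subset_compl_left
    _ ≤ 1 - μ[s | c] := by
      rw [measure_compl hs (measure_ne_top _ _)]
      exact tsub_le_tsub_right prob_le_one _

lemma cond_div_cond_eq_mul_cond_div_cond [IsFiniteMeasure μ] (hs : MeasurableSet s)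
    (hs' : MeasurableSet s') (hc : MeasurableSet c) (hμs : μ s ≠ 0) :
    μ[c | s'] / μ[c | s] = μ s / μ s' * (μ[s' | c] / μ[s | c]) := by
  rcases eq_or_ne (μ c) 0 with hμc | hμc
  · simp [cond_eq_zero_of_meas_eq_zero hμc, cond_apply, hs, hs',
      measure_mono_null inter_subset_right hμc]
  rw [cond_eq_inv_mul_cond_mul hs' hc, cond_eq_inv_mul_cond_mul hs hc,
    ENNReal.mul_div_mul_right _ _ hμc (measure_ne_top _ _), div_eq_mul_inv, div_eq_mul_inv,
    div_eq_mul_inv, ENNReal.mul_inv (.inl (ENNReal.inv_ne_zero.2 (measure_ne_top _ _)))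
      (.inl (ENNReal.inv_ne_top.2 hμs)), inv_inv]
  ring

lemma cond_le_mul_cond_div_cond [IsFiniteMeasure μ] (hs : MeasurableSet s)
    (hs' : MeasurableSet s') (hc : MeasurableSet c) (hμs' : μ s' ≠ 0) :
    μ[s | c] ≤ μ s / μ s' * (μ[c | s] / μ[c | s']) := by
  rcases eq_or_ne (μ s) 0 with hμs | hμs
  · simp [cond_apply hc, measure_mono_null inter_subset_right hμs]
  have h_odds : μ s / μ s' * (μ s' / μ s) = 1 := by
    rw [← ENNReal.mul_div_mul_comm (.inl hμs') (.inl (measure_ne_top _ _)), mul_comm,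
      ENNReal.div_self (mul_ne_zero hμs' hμs) (by finiteness)]
  rw [cond_div_cond_eq_mul_cond_div_cond hs' hs hc hμs', ← mul_assoc, h_odds, one_mul,
    div_eq_mul_inv]
  exact le_mul_of_one_le_right zero_le (ENNReal.one_le_inv.2 prob_le_one)

variable [IsFiniteMeasure μ] {ι : Type*} {l : Filter ι} {C : ι → Set Ω}

lemma tendsto_cond_div_cond_of_tendsto_cond (hs : MeasurableSet s) (hs' : MeasurableSet s')
    (hC : ∀ i, MeasurableSet (C i)) (hμs : μ s ≠ 0) (hμs' : μ s' ≠ 0) (hss' : Disjoint s s')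
    (h : Tendsto (fun i => μ[s | C i]) l (𝓝 1)) :
    Tendsto (fun i => μ[C i | s'] / μ[C i | s]) l (𝓝 0) := by
  have h_post : Tendsto (fun i => μ[s' | C i]) l (𝓝 0) := by
    have h_compl : Tendsto (fun i => 1 - μ[s | C i]) l (𝓝 0) := by
      simpa using ENNReal.Tendsto.sub tendsto_const_nhds h (.inl ENNReal.one_ne_top)
    exact tendsto_of_tendsto_of_tendsto_of_le_of_le tendsto_const_nhds h_compl (fun _ => zero_le)
      fun i => cond_le_one_sub_cond_of_disjoint hs hss'
  have h_odds : Tendsto (fun i => μ[s' | C i] / μ[s | C i]) l (𝓝 0) := by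
    simpa using ENNReal.Tendsto.div h_post (.inr one_ne_zero) h (.inl ENNReal.one_ne_top)
  simp_rw [cond_div_cond_eq_mul_cond_div_cond hs hs' (hC _) hμs]
  simpa using ENNReal.Tendsto.const_mul h_odds
    (.inr (ENNReal.div_ne_top (measure_ne_top _ _) hμs'))

lemma tendsto_cond_of_tendsto_cond_div_cond (hs : MeasurableSet s) (hs' : MeasurableSet s')
    (hC : ∀ i, MeasurableSet (C i)) (hμs' : μ s' ≠ 0)
    (h : Tendsto (fun i => μ[C i | s] / μ[C i | s']) l (𝓝 0)) :
    Tendsto (fun i => μ[s | C i]) l (𝓝 0) := by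
  have h_bound : Tendsto (fun i => μ s / μ s' * (μ[C i | s] / μ[C i | s'])) l (𝓝 0) := by
    simpa using ENNReal.Tendsto.const_mul h (.inr (ENNReal.div_ne_top (measure_ne_top _ _) hμs'))
  exact tendsto_of_tendsto_of_tendsto_of_le_of_le tendsto_const_nhds h_bound (fun _ => zero_le)
    fun i => cond_le_mul_cond_div_cond hs hs' (hC i) hμs'

end ConditionalProbability

section Fibers

variable {Ω β : Type*} [MeasurableSpace Ω] {μ : Measure Ω} [Countable β] {f : Ω → β}

lemma ae_restrict_compl_preimage_singleton {a : β} {p : Ω → Prop}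
    (h : ∀ b ≠ a, ∀ᵐ ω ∂μ.restrict (f ⁻¹' {b}), p ω) :
    ∀ᵐ ω ∂μ.restrict (f ⁻¹' {a})ᶜ, p ω := by
  have h_union : (f ⁻¹' {a})ᶜ = ⋃ b : {b // b ≠ a}, f ⁻¹' {(b : β)} := by
    ext ω
    simp
  rw [h_union, ae_restrict_iUnion_iff]
  exact fun b => h b b.2

variable [MeasurableSpace β] [MeasurableSingletonClass β]

lemma setIntegral_preimage_eq_tsum_setIntegral_fiber {E : Type*} [NormedAddCommGroup E]
    [NormedSpace ℝ E] (hf : Measurable f) {g : Ω → E} (hg : Integrable g μ) (t : Set β) :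
    ∫ ω in f ⁻¹' t, g ω ∂μ = ∑' b : t, ∫ ω in f ⁻¹' {(b : β)}, g ω ∂μ := by
  have h_union : f ⁻¹' t = ⋃ b : t, f ⁻¹' {(b : β)} := by
    rw [← Set.preimage_iUnion, Set.iUnion_of_singleton_coe]
  rw [h_union]
  exact integral_iUnion (fun b => hf (measurableSet_singleton _))
    (fun b b' hbb' => (Set.disjoint_singleton.2 (Subtype.coe_injective.ne hbb')).preimage f)
    hg.integrableOn

lemma condExp_indicator_comap_ae_eq_cond [IsFiniteMeasure μ] (hf : Measurable f) {A : Set Ω}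
    (hA : MeasurableSet A) :
    μ[A.indicator 1 | MeasurableSpace.comap f ‹_›] =ᵐ[μ]
      fun ω => (μ[A | f ⁻¹' {f ω}]).toReal := by
  set g : β → ℝ := fun b => (μ[A | f ⁻¹' {b}]).toReal
  have hg_meas : StronglyMeasurable[MeasurableSpace.comap f ‹_›] (g ∘ f) :=
    ((measurable_of_countable g).comp (comap_measurable f)).stronglyMeasurable
  have hg_int : Integrable (g ∘ f) μ := by
    refine .of_bound (hg_meas.mono hf.comap_le).aestronglyMeasurable 1 (ae_of_all _ fun ω => ?_)
    rw [Function.comp_apply, Real.norm_of_nonneg ENNReal.toReal_nonneg]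
    exact ENNReal.toReal_le_of_le_ofReal zero_le_one (by simpa using prob_le_one)
  have hA_int : Integrable (A.indicator (1 : Ω → ℝ)) μ := (integrable_const 1).indicator hA
  have h_fiber : ∀ b, ∫ ω in f ⁻¹' {b}, g (f ω) ∂μ = ∫ ω in f ⁻¹' {b}, A.indicator 1 ω ∂μ := by
    intro b
    have hb : MeasurableSet (f ⁻¹' {b}) := hf (measurableSet_singleton b)
    rw [setIntegral_congr_fun hb fun ω (hω : f ω = b) => by rw [hω], setIntegral_const,
      integral_indicator_one hA, measureReal_restrict_apply hA, smul_eq_mul, measureReal_def,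
      ← ENNReal.toReal_mul, mul_comm, cond_mul_eq_inter hb, Set.inter_comm, measureReal_def]
  refine (ae_eq_condExp_of_forall_setIntegral_eq hf.comap_le hA_int
    (fun _ _ _ => hg_int.integrableOn) (fun s hs _ => ?_) hg_meas.aestronglyMeasurable).symm
  obtain ⟨t, -, rfl⟩ := hs
  rw [setIntegral_preimage_eq_tsum_setIntegral_fiber hf hg_int,
    setIntegral_preimage_eq_tsum_setIntegral_fiber hf hA_int]
  exact tsum_congr fun b => h_fiber b

end Fibers

section ConditionalExpectation

variable {Ω : Type*} {m mΩ : MeasurableSpace Ω} {μ : Measure Ω} [IsFiniteMeasure μ] {A : Set Ω}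

lemma condExp_indicator_ae_eq_one_of_ae_eq_zero (hm : m ≤ mΩ) (hA : MeasurableSet A)
    (h : μ[A.indicator (1 : Ω → ℝ) | m] =ᵐ[μ.restrict Aᶜ] 0) :
    μ[A.indicator (1 : Ω → ℝ) | m] =ᵐ[μ.restrict A] 1 := by
  set Z := μ[A.indicator (1 : Ω → ℝ) | m]
  have hZ_int : Integrable Z μ := integrable_condExp
  have hZ_le : Z ≤ᵐ[μ] 1 := by
    have hA_le : A.indicator (1 : Ω → ℝ) ≤ 1 := Set.indicator_le_self' fun _ _ => zero_le_one
    have h_mono := condExp_mono (m := m) ((integrable_const (μ := μ) 1).indicator hA)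
      (integrable_const 1) (.of_forall hA_le)
    rwa [condExp_const hm] at h_mono
  have hZ_integral : ∫ ω in A, Z ω ∂μ = ∫ ω in A, 1 ∂μ := by
    have h_total := integral_add_compl hA hZ_int
    rw [integral_congr_ae h, integral_condExp hm, integral_indicator_one hA] at h_total
    simpa using h_total
  exact (integral_eq_iff_of_ae_le hZ_int.integrableOn (integrable_const 1)
    (ae_restrict_of_ae hZ_le)).1 hZ_integral

lemma ae_tendsto_condExp_indicator_one_of_ae_tendsto_zero {ℱ : Filtration ℕ mΩ}
    (hA : MeasurableSet A)
    (h : ∀ᵐ ω ∂μ.restrict Aᶜ, Tendsto (fun n => μ[A.indicator (1 : Ω → ℝ) | ℱ n] ω) atTop (𝓝 0)) :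
    ∀ᵐ ω ∂μ.restrict A, Tendsto (fun n => μ[A.indicator (1 : Ω → ℝ) | ℱ n] ω) atTop (𝓝 1) := by
  have h_levy := tendsto_ae_condExp (μ := μ) (ℱ := ℱ) (A.indicator 1)
  have h_lim : μ[A.indicator (1 : Ω → ℝ) | ⨆ n, ℱ n] =ᵐ[μ.restrict A] 1 := by
    refine condExp_indicator_ae_eq_one_of_ae_eq_zero (iSup_le ℱ.le) hA ?_
    filter_upwards [ae_restrict_of_ae h_levy, h] with ω h_levy_ω h_ω
    exact tendsto_nhds_unique h_levy_ω h_ω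
  filter_upwards [ae_restrict_of_ae h_levy, h_lim] with ω h_levy_ω h_lim_ω
  rwa [h_lim_ω] at h_levy_ω

end ConditionalExpectation

section Observations

variable {Θ : Type*} {X : ℕ → Type*}

def firstObservations (n : ℕ) (ω : Θ × (∀ i, X i)) : ∀ i : Fin n, X i := fun i => ω.2 i

lemma cylinder_eq_preimage_firstObservations (n : ℕ) (ω : Θ × (∀ i, X i)) :
    cylinder n ω = firstObservations n ⁻¹' {firstObservations n ω} := by
  ext ω'
  simp only [_root_.cylinder, Set.mem_ofPred_eq, Set.mem_preimage, Set.mem_singleton_iff,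
    funext_iff, firstObservations, Fin.forall_iff]

variable [MeasurableSpace Θ] [∀ n, MeasurableSpace (X n)]

lemma measurable_firstObservations (n : ℕ) : Measurable (firstObservations (Θ := Θ) (X := X) n) :=
  measurable_pi_lambda _ fun _ => (measurable_pi_apply _).comp measurable_snd

def observationFiltration : Filtration ℕ (inferInstance : MeasurableSpace (Θ × (∀ i, X i))) where
  seq n := MeasurableSpace.comap (firstObservations n) inferInstance
  mono' n m hnm := by
    have h_restrict : firstObservations (Θ := Θ) (X := X) n =
        (fun x (i : Fin n) => x (Fin.castLE hnm i)) ∘ firstObservations m := rfl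
    simp only [h_restrict, ← MeasurableSpace.comap_comp]
    exact MeasurableSpace.comap_mono
      (measurable_pi_lambda _ fun _ => measurable_pi_apply _).comap_le
  le' n := (measurable_firstObservations n).comap_le

variable [∀ n, MeasurableSingletonClass (X n)]

lemma measurableSet_cylinder (n : ℕ) (ω : Θ × (∀ i, X i)) : MeasurableSet (cylinder n ω) := by
  rw [cylinder_eq_preimage_firstObservations]
  exact measurable_firstObservations n (measurableSet_singleton _)

variable [∀ n, Countable (X n)]

lemma condExp_indicator_observationFiltration_ae_eq (μ : Measure (Θ × (∀ i, X i)))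
    [IsFiniteMeasure μ] (n : ℕ) {A : Set (Θ × (∀ i, X i))} (hA : MeasurableSet A) :
    μ[A.indicator 1 | observationFiltration n] =ᵐ[μ] fun ω => (μ[A | cylinder n ω]).toReal := by
  filter_upwards [condExp_indicator_comap_ae_eq_cond (measurable_firstObservations n) hA]
    with ω hω
  rw [cylinder_eq_preimage_firstObservations, ← hω]
  rfl

end Observations

/-- A discrete Bayesian large-sample estimation problem has a consistent posterior iff it has
convergent likelihood ratios: for all distinct `θ, θ'`, the likelihood ratio of `θ'` over `θ`
converges to `0` almost surely under `P_θ`. -/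
theorem consistent_posterior_iff_convergent_likelihood_ratios
    {Θ : Type*} [Countable Θ] [MeasurableSpace Θ] [DiscreteMeasurableSpace Θ]
    {X : ℕ → Type*} [∀ n, Countable (X n)] [∀ n, MeasurableSpace (X n)]
    [∀ n, DiscreteMeasurableSpace (X n)]
    (μ : Measure (Θ × (∀ i, X i))) [IsProbabilityMeasure μ]
    (hprior : ∀ θ : Θ, 0 < μ (Prod.fst ⁻¹' {θ})) :
    (∀ θ : Θ,
        ∀ᵐ ω ∂(μ[|Prod.fst ⁻¹' {θ}]),
          Tendsto (fun n : ℕ => (μ[|cylinder n ω]) (Prod.fst ⁻¹' {θ})) atTop (𝓝 1))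
      ↔
    (∀ θ θ' : Θ, θ' ≠ θ →
        ∀ᵐ ω ∂(μ[|Prod.fst ⁻¹' {θ}]),
          Tendsto
            (fun n : ℕ =>
              (μ[|Prod.fst ⁻¹' {θ'}]) (cylinder n ω) / (μ[|Prod.fst ⁻¹' {θ}]) (cylinder n ω))
            atTop (𝓝 0)) := by
  have hA (θ : Θ) : MeasurableSet (Prod.fst ⁻¹' {θ} : Set (Θ × (∀ i, X i))) :=
    measurable_fst (measurableSet_singleton θ)
  constructor
  · intro h θ θ' hθ'
    filter_upwards [h θ] with ω hω
    exact tendsto_cond_div_cond_of_tendsto_cond (hA θ) (hA θ') (measurableSet_cylinder · ω)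
      (hprior θ).ne' (hprior θ').ne' ((Set.disjoint_singleton.2 hθ'.symm).preimage _) hω
  · intro h θ
    have h_post := ae_all_iff.2 fun n => condExp_indicator_observationFiltration_ae_eq μ n (hA θ)
    have h_off : ∀ᵐ ω ∂μ.restrict (Prod.fst ⁻¹' {θ})ᶜ,
        Tendsto (fun n => μ[Prod.fst ⁻¹' {θ} | cylinder n ω]) atTop (𝓝 0) := by
      refine ae_restrict_compl_preimage_singleton fun θ' hθ' => ?_
      filter_upwards [ae_cond_iff_ae_restrict.1 (h θ' θ hθ'.symm)] with ω hω
      exact tendsto_cond_of_tendsto_cond_div_cond (hA θ) (hA θ') (measurableSet_cylinder · ω)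
        (hprior θ').ne' hω
    have h_on := ae_tendsto_condExp_indicator_one_of_ae_tendsto_zero
      (ℱ := observationFiltration) (hA θ) <| by
        filter_upwards [ae_restrict_of_ae h_post, h_off] with ω h_post_ω h_off_ω
        simpa [h_post_ω, Function.comp_def] using
          (ENNReal.tendsto_toReal ENNReal.zero_ne_top).comp h_off_ω
    rw [ae_cond_iff_ae_restrict]
    filter_upwards [ae_restrict_of_ae h_post, h_on] with ω h_post_ω h_on_ω
    refine (ENNReal.tendsto_toReal_iff (fun n => by finiteness) ENNReal.one_ne_top).1 ?_
    simpa [h_post_ω] using h_on_ω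
end

section
/- If a discrete Bayesian large-sample estimation problem has distinctive likelihoods, then every Maximum Likelihood estimator for it (whenever one exists for each n) is strongly consistent. -/
open MeasureTheory ProbabilityTheory Filter Set Topology
open scoped ENNReal

/-!
Fix the true parameter `θ` and a neighbourhood `U` of it. Almost surely the observed cylinder has
positive `θ`-likelihood, so the supremum of the likelihood over `U` is positive; it is also at most
the maximal likelihood, attained at the ML estimate. Hence, whenever the ML estimate leaves `U`,
the likelihood ratio of `Uᶜ` against `U` is at least `1`, which distinctive likelihoods exclude
for all large `n`. A countable neighbourhood basis of `θ` turns this into almost sure convergence.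
-/

theorem ae_measure_preimage_singleton_ne_zero {α β : Type*} [MeasurableSpace α] [Countable β]
    (ν : Measure α) (f : α → β) : ∀ᵐ a ∂ν, ν (f ⁻¹' {f a}) ≠ 0 := by
  have hnull : {a | ¬ν (f ⁻¹' {f a}) ≠ 0} = ⋃ b ∈ {b | ν (f ⁻¹' {b}) = 0}, f ⁻¹' {b} := by
    ext a
    simp
  rw [ae_iff, hnull, measure_biUnion_null_iff (to_countable _)]
  exact fun _ hb => hb

theorem cylinder_eq_preimage_singleton {Θ : Type*} {X : ℕ → Type*} (n : ℕ)
    (ω : Θ × ∀ i, X i) :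
    cylinder n ω =
      (fun ω' : Θ × ∀ i, X i => fun i : Fin n => ω'.2 i) ⁻¹' {fun i : Fin n => ω.2 i} := by
  ext ω'
  simp only [_root_.cylinder, mem_ofPred_eq, mem_preimage, mem_singleton_iff, funext_iff,
    Fin.forall_iff]

theorem ae_measure_cylinder_ne_zero {Θ : Type*} [MeasurableSpace Θ] {X : ℕ → Type*}
    [∀ n, Countable (X n)] [∀ n, MeasurableSpace (X n)] (ν : Measure (Θ × ∀ i, X i)) :
    ∀ᵐ ω ∂ν, ∀ n, ν (cylinder n ω) ≠ 0 :=
  ae_all_iff.2 fun n => by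
    simpa only [← cylinder_eq_preimage_singleton] using
      ae_measure_preimage_singleton_ne_zero ν fun ω (i : Fin n) => ω.2 i

theorem mem_of_iSup_compl_div_iSup_lt_one {Θ : Type*} {L : Θ → ℝ≥0∞} {θ θml : Θ} {U : Set Θ}
    (hmax : ∀ θ', L θ' ≤ L θml) (hθml : L θml ≠ ∞) (hθ : θ ∈ U) (hLθ : L θ ≠ 0)
    (hratio : (⨆ θ' ∈ Uᶜ, L θ') / (⨆ θ' ∈ U, L θ') < 1) : θml ∈ U := by
  by_contra hθmlU
  set d := ⨆ θ' ∈ U, L θ'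
  have hd_pos : d ≠ 0 := ne_bot_of_le_ne_bot hLθ (le_iSup₂_of_le θ hθ le_rfl)
  have hd_le : d ≤ L θml := iSup₂_le fun θ' _ => hmax θ'
  have hd_le_compl : d ≤ ⨆ θ' ∈ Uᶜ, L θ' := hd_le.trans (le_iSup₂_of_le θml hθmlU le_rfl)
  refine hratio.not_ge ?_
  rw [ENNReal.le_div_iff_mul_le (Or.inl hd_pos) (Or.inl (ne_top_of_le_ne_top hθml hd_le)),
    one_mul]
  exact hd_le_compl

theorem ae_tendsto_of_forall_mem {α β ι : Type*} [MeasurableSpace α] {μ : Measure α}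
    {la : Filter ι} {l : Filter β} [l.IsCountablyGenerated] {f : ι → α → β}
    (h : ∀ U ∈ l, ∀ᵐ a ∂μ, ∀ᶠ i in la, f i a ∈ U) :
    ∀ᵐ a ∂μ, Tendsto (fun i => f i a) la l := by
  obtain ⟨U, hU⟩ := l.exists_antitone_basis
  filter_upwards [ae_all_iff.2 fun k => h (U k) (hU.mem k)] with a ha
  exact hU.1.tendsto_right_iff.2 fun k _ => ha k

theorem ml_strongly_consistent_of_distinctive_likelihoods_general
    {Θ : Type*} [MeasurableSpace Θ]
    [TopologicalSpace Θ] [FirstCountableTopology Θ]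
    {X : ℕ → Type*} [∀ n, Countable (X n)] [∀ n, MeasurableSpace (X n)]
    (μ : Measure (Θ × (∀ i, X i)))
    -- distinctive likelihoods
    (hdl : ∀ θ : Θ, ∀ U ∈ 𝓝 θ,
        ∀ᵐ ω ∂(μ[|Prod.fst ⁻¹' {θ}]),
          limsup
            (fun n : ℕ =>
              (⨆ θ' ∈ Uᶜ, (μ[|Prod.fst ⁻¹' {θ'}]) (cylinder n ω)) /
                ⨆ θtilde ∈ U, (μ[|Prod.fst ⁻¹' {θtilde}]) (cylinder n ω))
            atTop < 1)
    -- a Maximum Likelihood estimator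
    (est : (n : ℕ) → (∀ i, X i) → Θ)
    (hML : ∀ (n : ℕ) (ω : Θ × (∀ i, X i)) (θ₀ : Θ),
        (μ[|Prod.fst ⁻¹' {θ₀}]) (cylinder n ω) ≤
          (μ[|Prod.fst ⁻¹' {est n ω.2}]) (cylinder n ω)) :
    ∀ θ : Θ, ∀ᵐ ω ∂(μ[|Prod.fst ⁻¹' {θ}]),
        Tendsto (fun n : ℕ => est n ω.2) atTop (𝓝 θ) := by
  intro θ
  refine ae_tendsto_of_forall_mem fun U hU => ?_
  filter_upwards [ae_measure_cylinder_ne_zero _, hdl θ U hU] with ω hpos hlimsup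
  filter_upwards [eventually_lt_of_limsup_lt hlimsup] with n hratio
  exact mem_of_iSup_compl_div_iSup_lt_one (hML n ω) (measure_ne_top _ _) (mem_of_mem_nhds hU)
    (hpos n) hratio

/-- If a discrete Bayesian large-sample estimation problem has distinctive likelihoods, then
every Maximum Likelihood estimator for it is strongly consistent. -/
theorem ml_strongly_consistent_of_distinctive_likelihoods
    {Θ : Type*} [Countable Θ] [MeasurableSpace Θ] [DiscreteMeasurableSpace Θ]
    [TopologicalSpace Θ] [T1Space Θ] [FirstCountableTopology Θ]
    {X : ℕ → Type*} [∀ n, Countable (X n)] [∀ n, MeasurableSpace (X n)]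
    [∀ n, DiscreteMeasurableSpace (X n)]
    (μ : Measure (Θ × (∀ i, X i))) [IsProbabilityMeasure μ]
    (hprior : ∀ θ : Θ, 0 < μ (Prod.fst ⁻¹' {θ}))
    -- distinctive likelihoods
    (hdl : ∀ θ : Θ, ∀ U ∈ 𝓝 θ,
        ∀ᵐ ω ∂(μ[|Prod.fst ⁻¹' {θ}]),
          limsup
            (fun n : ℕ =>
              (⨆ θ' ∈ Uᶜ, (μ[|Prod.fst ⁻¹' {θ'}]) (cylinder n ω)) /
                ⨆ θtilde ∈ U, (μ[|Prod.fst ⁻¹' {θtilde}]) (cylinder n ω))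
            atTop < 1)
    -- a Maximum Likelihood estimator
    (est : (n : ℕ) → (∀ i, X i) → Θ)
    (hdep : ∀ n (x y : ∀ i, X i), (∀ i < n, x i = y i) → est n x = est n y)
    (hML : ∀ (n : ℕ) (ω : Θ × (∀ i, X i)) (θ₀ : Θ),
        (μ[|Prod.fst ⁻¹' {θ₀}]) (cylinder n ω) ≤
          (μ[|Prod.fst ⁻¹' {est n ω.2}]) (cylinder n ω)) :
    ∀ θ : Θ, ∀ᵐ ω ∂(μ[|Prod.fst ⁻¹' {θ}]),
        Tendsto (fun n : ℕ => est n ω.2) atTop (𝓝 θ) :=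
  ml_strongly_consistent_of_distinctive_likelihoods_general μ hdl est hML
end

section
/- If a discrete large-sample estimation problem has distinctive likelihoods, then every approximate maximum likelihood estimator on it is strongly consistent. -/
open MeasureTheory ProbabilityTheory Filter Set Topology
open scoped ENNReal

/-- If a discrete large-sample estimation problem has distinctive likelihoods, then every
approximate maximum likelihood estimator on it is strongly consistent. -/
theorem approximate_ml_strongly_consistent_of_distinctive_likelihoods
    {Θ : Type*} [Countable Θ] [MeasurableSpace Θ] [DiscreteMeasurableSpace Θ]
    [TopologicalSpace Θ] [T1Space Θ] [FirstCountableTopology Θ]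
    {X : ℕ → Type*} [∀ n, Countable (X n)] [∀ n, MeasurableSpace (X n)]
    [∀ n, DiscreteMeasurableSpace (X n)]
    (μ : Measure (Θ × (∀ i, X i))) [IsProbabilityMeasure μ]
    (hprior : ∀ θ : Θ, 0 < μ (Prod.fst ⁻¹' {θ}))
    -- distinctive likelihoods
    (hdl : ∀ θ : Θ, ∀ U ∈ 𝓝 θ,
        ∀ᵐ ω ∂(μ[|Prod.fst ⁻¹' {θ}]),
          limsup
            (fun n : ℕ =>
              (⨆ θ' ∈ Uᶜ, (μ[|Prod.fst ⁻¹' {θ'}]) (cylinder n ω)) /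
                ⨆ θtilde ∈ U, (μ[|Prod.fst ⁻¹' {θtilde}]) (cylinder n ω))
            atTop < 1)
    -- an approximate maximum likelihood estimator
    (est : (n : ℕ) → (∀ i, X i) → Θ)
    (hdep : ∀ n (x y : ∀ i, X i), (∀ i < n, x i = y i) → est n x = est n y)
    (hAML : ∀ᵐ ω ∂μ,
        liminf
          (fun n : ℕ =>
            (μ[|Prod.fst ⁻¹' {est n ω.2}]) (cylinder n ω) /
              ⨆ θ' : Θ, (μ[|Prod.fst ⁻¹' {θ'}]) (cylinder n ω))
          atTop = 1) :
    ∀ θ : Θ, ∀ᵐ ω ∂(μ[|Prod.fst ⁻¹' {θ}]),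
        Tendsto (fun n : ℕ => est n ω.2) atTop (𝓝 θ) := by
  intro θ
  obtain ⟨U, hU⟩ := (𝓝 θ).exists_antitone_basis
  have hAML' : ∀ᵐ ω ∂(μ[|Prod.fst ⁻¹' {θ}]),
      liminf
        (fun n : ℕ =>
          (μ[|Prod.fst ⁻¹' {est n ω.2}]) (cylinder n ω) /
            ⨆ θ' : Θ, (μ[|Prod.fst ⁻¹' {θ'}]) (cylinder n ω))
        atTop = 1 :=
    cond_absolutelyContinuous.ae_le hAML
  have hdl' : ∀ᵐ ω ∂(μ[|Prod.fst ⁻¹' {θ}]), ∀ k : ℕ,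
      limsup
        (fun n : ℕ =>
          (⨆ θ' ∈ (U k)ᶜ, (μ[|Prod.fst ⁻¹' {θ'}]) (cylinder n ω)) /
            ⨆ θtilde ∈ U k, (μ[|Prod.fst ⁻¹' {θtilde}]) (cylinder n ω))
        atTop < 1 := by
    rw [MeasureTheory.ae_all_iff]
    exact fun k => hdl θ (U k) (hU.mem k)
  filter_upwards [hAML', hdl'] with ω h2 h1
  rw [hU.toHasBasis.tendsto_right_iff]
  intro k _
  obtain ⟨c, hc1, hc2⟩ := exists_between (h1 k)
  have hA := Filter.eventually_lt_of_limsup_lt hc1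
  have hB : ∀ᶠ n : ℕ in atTop, c <
      (μ[|Prod.fst ⁻¹' {est n ω.2}]) (cylinder n ω) /
        ⨆ θ' : Θ, (μ[|Prod.fst ⁻¹' {θ'}]) (cylinder n ω) :=
    Filter.eventually_lt_of_lt_liminf (by rw [h2]; exact hc2)
  filter_upwards [hA, hB] with n hAn hBn
  by_contra hmem
  have hle : (μ[|Prod.fst ⁻¹' {est n ω.2}]) (cylinder n ω) /
      ⨆ θ' : Θ, (μ[|Prod.fst ⁻¹' {θ'}]) (cylinder n ω) ≤
      (⨆ θ' ∈ (U k)ᶜ, (μ[|Prod.fst ⁻¹' {θ'}]) (cylinder n ω)) /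
        ⨆ θtilde ∈ U k, (μ[|Prod.fst ⁻¹' {θtilde}]) (cylinder n ω) := by
    refine ENNReal.div_le_div ?_ ?_
    · exact le_biSup (fun θ' => (μ[|Prod.fst ⁻¹' {θ'}]) (cylinder n ω)) hmem
    · exact iSup₂_le fun θ' _ => le_iSup (fun θ' => (μ[|Prod.fst ⁻¹' {θ'}]) (cylinder n ω)) θ'
  exact absurd (hBn.trans_le hle) (not_lt.mpr hAn.le)
end

section
/- For any estimator θ̂_n on a discrete Bayesian estimation problem, the excess expected message length I₂(θ̂_n) = H(θ̂_n(x_{1:n})) + Σ_{x_{1:n}} P(x_{1:n}=x_{1:n}) log[P(x_{1:n}=x_{1:n}) / P_{θ̂_n(x_{1:n})}^{(1:n)}(x_{1:n})] satisfies I₂(θ̂_n) ≥ 0, with equality if and only if for every θ with P(θ̂_n = θ) > 0 and every x_{1:n} with θ̂_n(x_{1:n}) = θ, it holds that P(x_{1:n} = x_{1:n} | θ̂_n = θ) = P_θ^{(1:n)}(x_{1:n}). -/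
open MeasureTheory ProbabilityTheory Set
open scoped ENNReal

/-!
Write `P` for the marginal law of the data, `p θ = P(θ̂ = θ)` and `q x = P_{θ̂ x}(x)`. Then
`r x = p (θ̂ x) * q x` is a sub-probability on the data, because each `P_θ` puts mass at most one
on the fibre `θ̂ = θ`. As `log (P x / q x) = log (P x / r x) + log p (θ̂ x)` and
`H(θ̂) = -∑ₓ P x log p (θ̂ x)`, the excess length is `∑ₓ P x log (P x / r x)`, which is
nonnegative by Gibbs' inequality, with equality iff `P = r`, i.e. iff `P(x | θ̂ = θ) = P_θ(x)`.
Series of mixed sign are handled through their positive and negative parts in `ℝ≥0∞`.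
-/

namespace ENNReal

-- `ofReal a` and `ofReal (-a)` are the positive and negative parts of `a`.
lemma ofReal_parts_eq_of_add_eq {a b c d : ℝ} (h : a + b = c + d) :
    ENNReal.ofReal a + ENNReal.ofReal b + ENNReal.ofReal (-c) + ENNReal.ofReal (-d) =
      ENNReal.ofReal c + ENNReal.ofReal d + ENNReal.ofReal (-a) + ENNReal.ofReal (-b) := by
  rw [← toReal_eq_toReal_iff' (by finiteness) (by finiteness)]
  simp only [toReal_add, toReal_ofReal', ne_eq, ofReal_ne_top, add_eq_top, or_self,
    not_false_eq_true, max_def]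
  split_ifs <;> linarith

lemma tsum_ofReal_parts_eq_of_add_eq {ι : Type*} {a b c d : ι → ℝ}
    (h : ∀ i, a i + b i = c i + d i) :
    ∑' i, ENNReal.ofReal (a i) + ∑' i, ENNReal.ofReal (b i) + ∑' i, ENNReal.ofReal (-c i) +
        ∑' i, ENNReal.ofReal (-d i) =
      ∑' i, ENNReal.ofReal (c i) + ∑' i, ENNReal.ofReal (d i) + ∑' i, ENNReal.ofReal (-a i) +
        ∑' i, ENNReal.ofReal (-b i) := by
  simp only [← ENNReal.tsum_add]
  exact tsum_congr fun i => ofReal_parts_eq_of_add_eq (h i)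

lemma le_and_eq_iff_of_add_eq {a c d e : ℝ≥0∞} (h : a + c = d + e) (hc : c ≠ ⊤) (he : e ≠ ⊤)
    (hcd : c ≤ d) : e ≤ a ∧ (a = e ↔ d = c) := by
  refine ⟨(ENNReal.add_le_add_iff_right hc).1 ?_, ⟨fun hae => ?_, fun hdc => ?_⟩⟩
  · calc e + c ≤ d + e := by rw [add_comm]; gcongr
      _ = a + c := h.symm
  · subst hae
    exact ((ENNReal.add_right_inj he).1 (by rw [add_comm a d, ← h, add_comm])).symm
  · subst hdc
    exact (ENNReal.add_left_inj hc).1 (h.trans (add_comm _ _))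

end ENNReal

open InformationTheory Real

lemma mul_klFun_div {p r : ℝ} (hr : r ≠ 0) : r * klFun (p / r) = p * log (p / r) + r - p := by
  rw [klFun_apply]; field_simp

lemma sub_le_mul_log_div {p r : ℝ} (hp : 0 ≤ p) (hr : 0 ≤ r) (hpr : 0 < p → 0 < r) :
    p - r ≤ p * log (p / r) := by
  rcases hp.eq_or_lt with rfl | hp
  · simpa using hr
  · have := mul_nonneg (hpr hp).le (klFun_nonneg (div_nonneg hp.le hr))
    rw [mul_klFun_div (hpr hp).ne'] at this
    linarith

lemma mul_log_div_eq_sub_iff {p r : ℝ} (hp : 0 ≤ p) (hpr : 0 < p → 0 < r) :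
    p * log (p / r) = p - r ↔ p = r := by
  rcases hp.eq_or_lt with rfl | hp
  · simp [eq_comm]
  · have hr := (hpr hp).ne'
    rw [← div_eq_one_iff_eq hr, ← klFun_eq_zero_iff (div_nonneg hp.le (hpr hp).le),
      ← mul_eq_zero_iff_left hr, mul_klFun_div hr]
    constructor <;> intro h <;> linarith

section Gibbs

variable {ι : Type*} {P r : ι → ℝ}

lemma tsum_ofReal_neg_mul_log_div_le (hP : ∀ i, 0 ≤ P i) (hr : ∀ i, 0 ≤ r i)
    (hPr : ∀ i, 0 < P i → 0 < r i) :
    ∑' i, ENNReal.ofReal (-(P i * log (P i / r i))) ≤ ∑' i, ENNReal.ofReal (r i) :=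
  ENNReal.tsum_le_tsum fun i => ENNReal.ofReal_le_ofReal <| by
    linarith [sub_le_mul_log_div (hP i) (hr i) (hPr i), hP i]

lemma tsum_ofReal_neg_mul_log_div_add_le (hP : ∀ i, 0 ≤ P i) (hr : ∀ i, 0 ≤ r i)
    (hPr : ∀ i, 0 < P i → 0 < r i) (hsum : ∑' i, ENNReal.ofReal (r i) ≤ ∑' i, ENNReal.ofReal (P i))
    (hfin : ∑' i, ENNReal.ofReal (P i) ≠ ⊤) :
    ∑' i, ENNReal.ofReal (-(P i * log (P i / r i))) +
        ∑' i, ENNReal.ofReal (P i * log (P i / r i) - (P i - r i)) ≤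
      ∑' i, ENNReal.ofReal (P i * log (P i / r i)) := by
  have balance := ENNReal.tsum_ofReal_parts_eq_of_add_eq
    (a := r) (b := fun i => P i * log (P i / r i)) (c := P)
    (d := fun i => P i * log (P i / r i) - (P i - r i)) fun i => by ring
  have hnonneg : ∀ i, 0 ≤ P i * log (P i / r i) - (P i - r i) := fun i =>
    sub_nonneg.2 (sub_le_mul_log_div (hP i) (hr i) (hPr i))
  simp only [ENNReal.ofReal_of_nonpos (neg_nonpos.2 (hP _)),
    ENNReal.ofReal_of_nonpos (neg_nonpos.2 (hr _)),
    ENNReal.ofReal_of_nonpos (neg_nonpos.2 (hnonneg _)), tsum_zero, add_zero] at balance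
  refine (ENNReal.add_le_add_iff_left hfin).1 ?_
  calc _ = ∑' i, ENNReal.ofReal (r i) + ∑' i, ENNReal.ofReal (P i * log (P i / r i)) := by
        rw [balance]; ring
    _ ≤ _ := by gcongr

lemma tsum_ofReal_mul_log_div_eq_iff (hP : ∀ i, 0 ≤ P i) (hr : ∀ i, 0 ≤ r i)
    (hPr : ∀ i, 0 < P i → 0 < r i) (hsum : ∑' i, ENNReal.ofReal (r i) ≤ ∑' i, ENNReal.ofReal (P i))
    (hfin : ∑' i, ENNReal.ofReal (P i) ≠ ⊤) :
    ∑' i, ENNReal.ofReal (P i * log (P i / r i)) =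
        ∑' i, ENNReal.ofReal (-(P i * log (P i / r i))) ↔ ∀ i, P i = r i := by
  refine ⟨fun h => ?_, fun h => by simp [h]⟩
  have hneg : ∑' i, ENNReal.ofReal (-(P i * log (P i / r i))) ≠ ⊤ :=
    ((tsum_ofReal_neg_mul_log_div_le hP hr hPr).trans hsum).trans_lt hfin.lt_top |>.ne
  have hgap := tsum_ofReal_neg_mul_log_div_add_le hP hr hPr hsum hfin
  rw [h] at hgap
  have hzero := ENNReal.tsum_eq_zero.1 <|
    nonpos_iff_eq_zero.1 (ENNReal.le_of_add_le_add_left hneg (by simpa using hgap))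
  intro i
  rw [← mul_log_div_eq_sub_iff (hP i) (hPr i)]
  exact (sub_eq_zero.1 (le_antisymm (ENNReal.ofReal_eq_zero.1 (hzero i))
    (sub_nonneg.2 (sub_le_mul_log_div (hP i) (hr i) (hPr i)))))

end Gibbs

lemma tsum_ofReal_neg_mul_log_div_le_and_eq_iff {X : Type*} {P q w : X → ℝ}
    (hP : ∀ x, 0 ≤ P x) (hq : ∀ x, 0 ≤ q x) (hPw : ∀ x, P x ≤ w x) (hw : ∀ x, w x ≤ 1)
    (hPq : ∀ x, 0 < P x → q x ≠ 0)
    (hsum : ∑' x, ENNReal.ofReal (w x * q x) ≤ ∑' x, ENNReal.ofReal (P x))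
    (hfin : ∑' x, ENNReal.ofReal (P x) ≠ ⊤)
    (hneg : ∑' x, ENNReal.ofReal (-(P x * log (P x / q x))) ≠ ⊤) :
    ∑' x, ENNReal.ofReal (-(P x * log (P x / q x))) ≤
        ∑' x, ENNReal.ofReal (-(P x * log (w x))) + ∑' x, ENNReal.ofReal (P x * log (P x / q x)) ∧
      (∑' x, ENNReal.ofReal (-(P x * log (w x))) + ∑' x, ENNReal.ofReal (P x * log (P x / q x)) =
          ∑' x, ENNReal.ofReal (-(P x * log (P x / q x))) ↔ ∀ x, P x = w x * q x) := by
  have hr : ∀ x, 0 ≤ w x * q x := fun x => mul_nonneg ((hP x).trans (hPw x)) (hq x)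
  have hPr : ∀ x, 0 < P x → 0 < w x * q x := fun x hx =>
    mul_pos (hx.trans_le (hPw x)) ((hq x).lt_of_ne' (hPq x hx))
  have hv : ∀ x, P x * log (w x) ≤ 0 := fun x =>
    mul_nonpos_of_nonneg_of_nonpos (hP x) (log_nonpos ((hP x).trans (hPw x)) (hw x))
  have hsplit : ∀ x, P x * log (P x / q x) + -(P x * log (w x)) =
      P x * log (P x / (w x * q x)) + 0 := fun x => by
    rcases (hP x).eq_or_lt with h0 | hpos
    · simp [← h0]
    · rw [show P x / (w x * q x) = P x / q x / w x by ring,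
        log_div (div_pos hpos ((hq x).lt_of_ne' (hPq x hpos))).ne' (hpos.trans_le (hPw x)).ne']
      ring
  have balance := ENNReal.tsum_ofReal_parts_eq_of_add_eq hsplit
  simp only [neg_zero, ENNReal.ofReal_zero, tsum_zero, add_zero, neg_neg,
    ENNReal.ofReal_of_nonpos (hv _)] at balance
  refine ENNReal.le_and_eq_iff_of_add_eq
    (c := ∑' x, ENNReal.ofReal (-(P x * log (P x / (w x * q x))))) ?_ ?_ hneg ?_
    |>.imp_right (·.trans (tsum_ofReal_mul_log_div_eq_iff hP hr hPr hsum hfin))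
  · rw [← balance]; ring
  · exact ((tsum_ofReal_neg_mul_log_div_le hP hr hPr).trans hsum).trans_lt hfin.lt_top |>.ne
  · exact le_self_add.trans (tsum_ofReal_neg_mul_log_div_add_le hP hr hPr hsum hfin)

section Estimator

variable {Θ X : Type*} (est : X → Θ)

lemma snd_preimage_singleton_subset (x : X) :
    Prod.snd ⁻¹' {x} ⊆ {ω : Θ × X | est ω.2 = est x} :=
  fun _ hω => congrArg est hω

variable [MeasurableSpace Θ] [MeasurableSpace X] (μ : Measure (Θ × X))

lemma measure_snd_singleton_le (x : X) :
    μ (Prod.snd ⁻¹' {x}) ≤ μ {ω : Θ × X | est ω.2 = est x} :=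
  measure_mono (snd_preimage_singleton_subset est x)

variable [DiscreteMeasurableSpace X]

lemma cond_est_apply_snd_singleton (x : X) :
    (μ[|{ω : Θ × X | est ω.2 = est x}]) (Prod.snd ⁻¹' {x}) =
      (μ {ω : Θ × X | est ω.2 = est x})⁻¹ * μ (Prod.snd ⁻¹' {x}) := by
  rw [cond_apply' (measurable_snd (MeasurableSet.of_discrete)),
    inter_eq_self_of_subset_right (snd_preimage_singleton_subset est x)]

lemma forall_cond_est_eq_iff [IsFiniteMeasure μ] :
    (∀ θ : Θ, 0 < μ {ω : Θ × X | est ω.2 = θ} → ∀ x : X, est x = θ →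
        (μ[|{ω : Θ × X | est ω.2 = θ}]) (Prod.snd ⁻¹' {x}) =
          (μ[|Prod.fst ⁻¹' {θ}]) (Prod.snd ⁻¹' {x})) ↔
      ∀ x : X, (μ (Prod.snd ⁻¹' {x})).toReal = (μ {ω : Θ × X | est ω.2 = est x}).toReal *
        ((μ[|Prod.fst ⁻¹' {est x}]) (Prod.snd ⁻¹' {x})).toReal := by
  have hpointwise : ∀ x : X, (0 < μ {ω : Θ × X | est ω.2 = est x} →
      (μ[|{ω : Θ × X | est ω.2 = est x}]) (Prod.snd ⁻¹' {x}) =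
        (μ[|Prod.fst ⁻¹' {est x}]) (Prod.snd ⁻¹' {x})) ↔
      (μ (Prod.snd ⁻¹' {x})).toReal = (μ {ω : Θ × X | est ω.2 = est x}).toReal *
        ((μ[|Prod.fst ⁻¹' {est x}]) (Prod.snd ⁻¹' {x})).toReal := fun x => by
    rw [cond_est_apply_snd_singleton]
    rcases eq_or_ne (μ {ω : Θ × X | est ω.2 = est x}) 0 with hp | hp
    · simp [hp, nonpos_iff_eq_zero.1 (hp ▸ measure_snd_singleton_le est μ x)]
    · rw [← ENNReal.toReal_mul, ENNReal.toReal_eq_toReal_iff' (measure_ne_top μ _)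
        (ENNReal.mul_ne_top (measure_ne_top μ _) (measure_ne_top _ _)), mul_comm,
        ← div_eq_mul_inv, eq_comm, ENNReal.eq_div_iff hp (measure_ne_top μ _), eq_comm]
      exact ⟨fun h => h (pos_iff_ne_zero.2 hp), fun h _ => h⟩
  refine ⟨fun h x => (hpointwise x).1 (fun hp => h _ hp x rfl), ?_⟩
  rintro h θ hp x rfl
  exact (hpointwise x).2 (h x) hp

variable [Countable X]

lemma tsum_measure_snd_fiber (θ : Θ) :
    ∑' x : est ⁻¹' {θ}, μ (Prod.snd ⁻¹' {(x : X)}) = μ {ω : Θ × X | est ω.2 = θ} :=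
  tsum_measure_preimage_singleton (Set.to_countable _)
    fun _ _ => measurable_snd (MeasurableSet.of_discrete)

lemma tsum_measure_snd_singleton [IsProbabilityMeasure μ] :
    ∑' x, μ (Prod.snd ⁻¹' {x}) = 1 := by
  rw [← tsum_univ, tsum_measure_preimage_singleton Set.countable_univ
    fun _ _ => measurable_snd (MeasurableSet.of_discrete), preimage_univ, measure_univ]

lemma tsum_mul_measure_snd_singleton (c : Θ → ℝ≥0∞) :
    ∑' x, c (est x) * μ (Prod.snd ⁻¹' {x}) = ∑' θ, c θ * μ {ω : Θ × X | est ω.2 = θ} := by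
  rw [← ENNReal.tsum_fiberwise _ est]
  refine tsum_congr fun θ => ?_
  rw [← tsum_measure_snd_fiber, ← ENNReal.tsum_mul_left]
  exact tsum_congr fun ⟨x, (hx : est x = θ)⟩ => by rw [hx]

lemma tsum_mul_cond_le (c : Θ → ℝ≥0∞) :
    ∑' x, c (est x) * (μ[|Prod.fst ⁻¹' {est x}]) (Prod.snd ⁻¹' {x}) ≤ ∑' θ, c θ := by
  rw [← ENNReal.tsum_fiberwise _ est]
  refine ENNReal.tsum_le_tsum fun θ => ?_
  calc ∑' x : est ⁻¹' {θ}, c (est x) * (μ[|Prod.fst ⁻¹' {est x}]) (Prod.snd ⁻¹' {(x : X)})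
      = c θ * (μ[|Prod.fst ⁻¹' {θ}]) {ω : Θ × X | est ω.2 = θ} := by
        rw [← tsum_measure_snd_fiber, ← ENNReal.tsum_mul_left]
        exact tsum_congr fun ⟨x, (hx : est x = θ)⟩ => by rw [hx]
    _ ≤ c θ := mul_le_of_le_one_right' prob_le_one

lemma tsum_measure_fiber_mul_cond_le :
    ∑' x, μ {ω : Θ × X | est ω.2 = est x} * (μ[|Prod.fst ⁻¹' {est x}]) (Prod.snd ⁻¹' {x}) ≤
      ∑' x, μ (Prod.snd ⁻¹' {x}) := by
  refine (tsum_mul_cond_le est μ fun θ => μ {ω : Θ × X | est ω.2 = θ}).trans_eq ?_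
  simpa using (tsum_mul_measure_snd_singleton est μ 1).symm

lemma tsum_ofReal_negMulLog_measure_fiber [IsFiniteMeasure μ] :
    ∑' θ, ENNReal.ofReal (negMulLog (μ {ω : Θ × X | est ω.2 = θ}).toReal) =
      ∑' x, ENNReal.ofReal (-((μ (Prod.snd ⁻¹' {x})).toReal *
        log (μ {ω : Θ × X | est ω.2 = est x}).toReal)) := by
  have hmul : ∀ (m : ℝ≥0∞) (t : ℝ), m ≠ ⊤ → ENNReal.ofReal (-(m.toReal * t)) =
      ENNReal.ofReal (-t) * m := fun m t hm => by
    rw [neg_mul_eq_mul_neg, mul_comm, ENNReal.ofReal_mul' ENNReal.toReal_nonneg,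
      ENNReal.ofReal_toReal hm]
  calc _ = ∑' θ, ENNReal.ofReal (-log (μ {ω : Θ × X | est ω.2 = θ}).toReal) *
          μ {ω : Θ × X | est ω.2 = θ} :=
        tsum_congr fun θ => by rw [negMulLog, neg_mul, hmul _ _ (measure_ne_top μ _)]
    _ = _ := (tsum_mul_measure_snd_singleton est μ _).symm
    _ = _ := tsum_congr fun x => (hmul _ _ (measure_ne_top μ _)).symm

end Estimator

theorem excess_expected_message_length_nonneg_general
    {Θ : Type*} [MeasurableSpace Θ]
    {X : Type*} [Countable X] [MeasurableSpace X] [DiscreteMeasurableSpace X]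
    (μ : Measure (Θ × X)) [IsProbabilityMeasure μ]
    (est : X → Θ)
    -- Shannon entropy of the estimate
    (Hpart : ℝ≥0∞)
    (hH : Hpart = ∑' θ : Θ,
        ENNReal.ofReal (Real.negMulLog ((μ {ω : Θ × X | est ω.2 = θ}).toReal)))
    -- positive and negative parts of Σ_x P(x) log(P(x) / P_{θ̂(x)}(x))
    (Spos Sneg : ℝ≥0∞)
    (hSpos : Spos = ∑' x : X,
        if 0 < (μ (Prod.snd ⁻¹' {x})).toReal ∧
            ((μ[|Prod.fst ⁻¹' {est x}]) (Prod.snd ⁻¹' {x})).toReal = 0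
        then (⊤ : ℝ≥0∞)
        else ENNReal.ofReal ((μ (Prod.snd ⁻¹' {x})).toReal *
          Real.log ((μ (Prod.snd ⁻¹' {x})).toReal /
            ((μ[|Prod.fst ⁻¹' {est x}]) (Prod.snd ⁻¹' {x})).toReal)))
    (hSneg : Sneg = ∑' x : X,
        ENNReal.ofReal (-((μ (Prod.snd ⁻¹' {x})).toReal *
          Real.log ((μ (Prod.snd ⁻¹' {x})).toReal /
            ((μ[|Prod.fst ⁻¹' {est x}]) (Prod.snd ⁻¹' {x})).toReal))))
    -- the sum is well defined
    (hfin : Sneg ≠ ⊤) :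
    Sneg ≤ Hpart + Spos ∧
    (Hpart + Spos = Sneg ↔
      ∀ θ : Θ, 0 < μ {ω : Θ × X | est ω.2 = θ} →
        ∀ x : X, est x = θ →
          (μ[|{ω : Θ × X | est ω.2 = θ}]) (Prod.snd ⁻¹' {x}) =
            (μ[|Prod.fst ⁻¹' {θ}]) (Prod.snd ⁻¹' {x})) := by
  rw [forall_cond_est_eq_iff]
  by_cases hdeg : ∃ x, 0 < (μ (Prod.snd ⁻¹' {x})).toReal ∧
      ((μ[|Prod.fst ⁻¹' {est x}]) (Prod.snd ⁻¹' {x})).toReal = 0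
  · obtain ⟨x₀, hP, hQ⟩ := hdeg
    have hSpos_top : Spos = ⊤ := by
      rw [hSpos, ← top_le_iff]
      exact (if_pos ⟨hP, hQ⟩).symm.le.trans (ENNReal.le_tsum x₀)
    rw [hSpos_top, add_top]
    refine ⟨le_top, iff_of_false (Ne.symm hfin) fun h => ?_⟩
    exact hP.ne' ((h x₀).trans (by rw [hQ, mul_zero]))
  · push Not at hdeg
    have hSpos_eq : Spos = ∑' x : X, ENNReal.ofReal ((μ (Prod.snd ⁻¹' {x})).toReal *
        Real.log ((μ (Prod.snd ⁻¹' {x})).toReal /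
          ((μ[|Prod.fst ⁻¹' {est x}]) (Prod.snd ⁻¹' {x})).toReal)) := by
      rw [hSpos]
      exact tsum_congr fun x => if_neg fun h => hdeg x h.1 h.2
    rw [hH, tsum_ofReal_negMulLog_measure_fiber, hSpos_eq, hSneg]
    rw [hSneg] at hfin
    refine tsum_ofReal_neg_mul_log_div_le_and_eq_iff (fun _ => ENNReal.toReal_nonneg)
      (fun _ => ENNReal.toReal_nonneg)
      (fun x => ENNReal.toReal_mono (measure_ne_top μ _) (measure_snd_singleton_le est μ x))
      (fun _ => measureReal_le_one) hdeg ?_ ?_ hfin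
    · simpa [ENNReal.ofReal_mul] using tsum_measure_fiber_mul_cond_le est μ
    · simp [tsum_measure_snd_singleton]

/-- The excess expected message length `I₂` of an estimator is nonnegative, with equality iff
conditioned on each estimate `θ` of positive probability, the data distribution equals `P_θ`.
Here `I₂ = H(θ̂) + Σ_x P(x) log (P(x) / P_{θ̂(x)}(x))`; the mixed-sign data sum is represented
by its positive part `Spos` (with terms where `P(x) > 0 = P_{θ̂(x)}(x)` contributing `⊤`) and
its negative part `Sneg` (assumed finite, i.e. the sum is well defined), so that `I₂ ≥ 0`
reads `Sneg ≤ H + Spos` and `I₂ = 0` reads `H + Spos = Sneg`. -/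
theorem excess_expected_message_length_nonneg
    {Θ : Type*} [Countable Θ] [MeasurableSpace Θ] [DiscreteMeasurableSpace Θ]
    {X : Type*} [Countable X] [MeasurableSpace X] [DiscreteMeasurableSpace X]
    (μ : Measure (Θ × X)) [IsProbabilityMeasure μ]
    (est : X → Θ)
    -- Shannon entropy of the estimate
    (Hpart : ℝ≥0∞)
    (hH : Hpart = ∑' θ : Θ,
        ENNReal.ofReal (Real.negMulLog ((μ {ω : Θ × X | est ω.2 = θ}).toReal)))
    -- positive and negative parts of Σ_x P(x) log(P(x) / P_{θ̂(x)}(x))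
    (Spos Sneg : ℝ≥0∞)
    (hSpos : Spos = ∑' x : X,
        if 0 < (μ (Prod.snd ⁻¹' {x})).toReal ∧
            ((μ[|Prod.fst ⁻¹' {est x}]) (Prod.snd ⁻¹' {x})).toReal = 0
        then (⊤ : ℝ≥0∞)
        else ENNReal.ofReal ((μ (Prod.snd ⁻¹' {x})).toReal *
          Real.log ((μ (Prod.snd ⁻¹' {x})).toReal /
            ((μ[|Prod.fst ⁻¹' {est x}]) (Prod.snd ⁻¹' {x})).toReal)))
    (hSneg : Sneg = ∑' x : X,
        ENNReal.ofReal (-((μ (Prod.snd ⁻¹' {x})).toReal *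
          Real.log ((μ (Prod.snd ⁻¹' {x})).toReal /
            ((μ[|Prod.fst ⁻¹' {est x}]) (Prod.snd ⁻¹' {x})).toReal))))
    -- the sum is well defined
    (hfin : Sneg ≠ ⊤) :
    Sneg ≤ Hpart + Spos ∧
    (Hpart + Spos = Sneg ↔
      ∀ θ : Θ, 0 < μ {ω : Θ × X | est ω.2 = θ} →
        ∀ x : X, est x = θ →
          (μ[|{ω : Θ × X | est ω.2 = θ}]) (Prod.snd ⁻¹' {x}) =
            (μ[|Prod.fst ⁻¹' {θ}]) (Prod.snd ⁻¹' {x})) :=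
  excess_expected_message_length_nonneg_general μ est Hpart hH Spos Sneg hSpos hSneg hfin
end
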